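/- arXiv:2304.07942 — 6 statements merged into one kernel-verified Lean document; each statement's English description precedes it below -/
import Mathlib

section
/- (Theorem 1, LU-CBTB for a fixed set of test points.) Suppose the estimator g satisfies ∫ ‖g‖ f_m dμ < ∞ for every m = 0,…,P, ∫ ‖g − θ_0‖² f_0 dμ < ∞, and the pointwise C-unbiasedness conditions U_mᵀ W (∫ (g − θ_m) f_m dμ) = 0 for every m = 0,…,P. If the matrix D is invertible, then the weighted mean-squared error satisfies ∫ (g − θ_0)ᵀ W (g − θ_0) f_0 dμ ≥ tᵀ D⁻¹ t. -/
/-! For any vectors `cₘ`, integrating the pointwise nonnegativity of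
`f₀ ‖(g − θ₀) − ∑ₘ (fₘ / f₀) cₘ‖²_W` gives
`WMSE ≥ 2 ∑ₘ cₘᵀ W ∫ fₘ (g − θ₀) − ∑ₘₙ Bₘₙ cₘᵀ W cₙ`.
Since `∫ fₘ = 1`, C-unbiasedness turns `Uₘᵀ W ∫ fₘ (g − θ₀)` into the `m`-th block of `t`, so for
`cₘ = Uₘ aₘ` the right side is `2 aᵀ t − aᵀ D a`, and `a = D⁻¹ t` makes it `tᵀ D⁻¹ t`. -/

open MeasureTheory Matrix

namespace Matrix

variable {ι κ n : Type*} [Fintype ι] [Fintype κ] [Fintype n]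

lemma mulVec_dotProduct (A : Matrix n κ ℝ) (x : κ → ℝ) (y : n → ℝ) :
    A *ᵥ x ⬝ᵥ y = x ⬝ᵥ Aᵀ *ᵥ y := by
  rw [dotProduct_mulVec, vecMul_transpose]

lemma sum_mulVec_curry_dotProduct_mulVec (U : ι → Matrix n κ ℝ) (W : Matrix n n ℝ)
    (a : ι × κ → ℝ) (w : ι → n → ℝ) :
    ∑ m, (U m *ᵥ Function.curry a m) ⬝ᵥ W *ᵥ w m
      = a ⬝ᵥ fun p => ((U p.1)ᵀ *ᵥ (W *ᵥ w p.1)) p.2 := by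
  rw [dotProduct, Fintype.sum_prod_type]
  exact Finset.sum_congr rfl fun m _ => mulVec_dotProduct _ _ _

lemma sum_sum_mul_mulVec_curry_dotProduct_mulVec (U : ι → Matrix n κ ℝ) (W : Matrix n n ℝ)
    (B : Matrix ι ι ℝ) {D : Matrix (ι × κ) (ι × κ) ℝ}
    (hD : ∀ m m' i j, D (m, i) (m', j) = ((U m)ᵀ * W * U m') i j * B m m') (a : ι × κ → ℝ) :
    ∑ m, ∑ m', B m m' * ((U m *ᵥ Function.curry a m) ⬝ᵥ W *ᵥ (U m' *ᵥ Function.curry a m'))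
      = a ⬝ᵥ D *ᵥ a := by
  simp only [mulVec_dotProduct, mulVec_mulVec]
  simp only [dotProduct, mulVec, Fintype.sum_prod_type, hD, Finset.mul_sum, Matrix.mul_assoc]
  refine Finset.sum_congr rfl fun m _ => Finset.sum_comm.trans ?_
  refine Finset.sum_congr rfl fun i _ =>
    Finset.sum_congr rfl fun m' _ => Finset.sum_congr rfl fun j _ => ?_
  simp only [Function.curry_apply]
  ring

lemma IsHermitian.dotProduct_mulVec_comm {A : Matrix n n ℝ} (hA : A.IsHermitian) (u v : n → ℝ) :
    u ⬝ᵥ A *ᵥ v = v ⬝ᵥ A *ᵥ u := by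
  rw [dotProduct_mulVec, ← mulVec_transpose, dotProduct_comm,
    ← conjTranspose_eq_transpose_of_trivial, hA.eq]

variable [DecidableEq n]

noncomputable def toContinuousBilinearMap (A : Matrix n n ℝ) : (n → ℝ) →L[ℝ] (n → ℝ) →L[ℝ] ℝ :=
  (toLinearMap₂' ℝ A).toContinuousBilinearMap

@[simp]
lemma toContinuousBilinearMap_apply (A : Matrix n n ℝ) (u v : n → ℝ) :
    A.toContinuousBilinearMap u v = u ⬝ᵥ A *ᵥ v :=
  toLinearMap₂'_apply' A u v

lemma abs_dotProduct_mulVec_le (A : Matrix n n ℝ) (u v : n → ℝ) :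
    |u ⬝ᵥ A *ᵥ v| ≤ ‖A.toContinuousBilinearMap‖ * ‖u‖ * ‖v‖ := by
  simpa using A.toContinuousBilinearMap.le_opNorm₂ u v

end Matrix

namespace Matrix.PosSemidef

variable {n : Type*} [Fintype n] {W : Matrix n n ℝ}

lemma two_mul_dotProduct_mulVec_sub_le (hW : W.PosSemidef) (u v : n → ℝ) :
    2 * (v ⬝ᵥ W *ᵥ u) - v ⬝ᵥ W *ᵥ v ≤ u ⬝ᵥ W *ᵥ u := by
  have h := hW.dotProduct_mulVec_nonneg (u - v)
  simp only [star_trivial, mulVec_sub, dotProduct_sub, sub_dotProduct,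
    hW.isHermitian.dotProduct_mulVec_comm u v] at h
  linarith

lemma two_mul_sum_sub_le {ι : Type*} [Fintype ι] (hW : W.PosSemidef) {w : ℝ} (hw : 0 < w)
    (r : ι → ℝ) (c : ι → n → ℝ) (u : n → ℝ) :
    2 * ∑ m, r m * (c m ⬝ᵥ W *ᵥ u) - ∑ m, ∑ m', r m * r m' / w * (c m ⬝ᵥ W *ᵥ c m')
      ≤ w * (u ⬝ᵥ W *ᵥ u) := by
  have h := hW.two_mul_dotProduct_mulVec_sub_le u (∑ m, (r m / w) • c m)
  simp only [mulVec_sum, mulVec_smul, dotProduct_sum, sum_dotProduct, smul_dotProduct,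
    dotProduct_smul, smul_eq_mul] at h
  have hlin : w * ∑ m, r m / w * (c m ⬝ᵥ W *ᵥ u) = ∑ m, r m * (c m ⬝ᵥ W *ᵥ u) := by
    rw [Finset.mul_sum]
    exact Finset.sum_congr rfl fun m _ => by field_simp
  have hquad : w * ∑ m', r m' / w * ∑ m, r m / w * (c m ⬝ᵥ W *ᵥ c m')
      = ∑ m, ∑ m', r m * r m' / w * (c m ⬝ᵥ W *ᵥ c m') := by
    simp only [Finset.mul_sum]
    rw [Finset.sum_comm]
    exact Finset.sum_congr rfl fun m _ => Finset.sum_congr rfl fun m' _ => by field_simp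
  rw [← hlin, ← hquad]
  linarith [mul_le_mul_of_nonneg_left h hw.le]

end Matrix.PosSemidef

namespace MeasureTheory

variable {Ω : Type*} [MeasurableSpace Ω] {μ : Measure Ω}

lemma Integrable.smul_sub_const {E : Type*} [NormedAddCommGroup E] [NormedSpace ℝ E]
    {f : Ω → ℝ} {g : Ω → E} (hf : Integrable f μ) (hf_nonneg : ∀ x, 0 ≤ f x)
    (hg : AEStronglyMeasurable g μ) (hfg : Integrable (fun x => ‖g x‖ * f x) μ) (θ : E) :
    Integrable (fun x => f x • (g x - θ)) μ := by
  simp only [smul_sub]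
  refine Integrable.sub ?_ (hf.smul_const θ)
  refine hfg.mono' (hf.aestronglyMeasurable.smul hg) (.of_forall fun x => ?_)
  rw [norm_smul, Real.norm_of_nonneg (hf_nonneg x), mul_comm]

lemma integral_smul_sub_eq_add {E : Type*} [NormedAddCommGroup E] [NormedSpace ℝ E]
    [CompleteSpace E] {f : Ω → ℝ} {g : Ω → E} (hf : Integrable f μ) (hf_one : ∫ x, f x ∂μ = 1)
    {θ : E} (hfg : Integrable (fun x => f x • (g x - θ)) μ) (θ' : E) :
    ∫ x, f x • (g x - θ') ∂μ = ∫ x, f x • (g x - θ) ∂μ + (θ - θ') := by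
  have hsplit : (fun x => f x • (g x - θ')) = fun x => f x • (g x - θ) + f x • (θ - θ') := by
    ext1 x; rw [← smul_add, sub_add_sub_cancel]
  rw [hsplit, integral_add hfg (hf.smul_const _), integral_smul_const, hf_one, one_smul]

variable {n : Type*} [Fintype n] [DecidableEq n]

lemma Integrable.dotProduct_mulVec {F : Ω → n → ℝ} (hF : Integrable F μ) (c : n → ℝ)
    (A : Matrix n n ℝ) : Integrable (fun x => c ⬝ᵥ A *ᵥ F x) μ := by
  simpa using (A.toContinuousBilinearMap c).integrable_comp hF

lemma integral_dotProduct_mulVec {F : Ω → n → ℝ} (hF : Integrable F μ) (c : n → ℝ)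
    (A : Matrix n n ℝ) : ∫ x, c ⬝ᵥ A *ᵥ F x ∂μ = c ⬝ᵥ A *ᵥ ∫ x, F x ∂μ := by
  simpa using (A.toContinuousBilinearMap c).integral_comp_comm hF

lemma AEStronglyMeasurable.integrable_mul_dotProduct_mulVec_self {f : Ω → ℝ} {F : Ω → n → ℝ}
    (hf : AEStronglyMeasurable f μ) (hf_nonneg : ∀ᵐ x ∂μ, 0 ≤ f x)
    (hF : AEStronglyMeasurable F μ)
    (hfF : Integrable (fun x => ‖F x‖ ^ 2 * f x) μ) (A : Matrix n n ℝ) :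
    Integrable (fun x => f x * (F x ⬝ᵥ A *ᵥ F x)) μ := by
  refine (hfF.const_mul ‖A.toContinuousBilinearMap‖).mono' ?_ (hf_nonneg.mono fun x hx => ?_)
  · exact hf.mul <| by
      simpa using A.toContinuousBilinearMap.continuous₂.comp_aestronglyMeasurable₂ hF hF
  · rw [norm_mul, Real.norm_of_nonneg hx, Real.norm_eq_abs]
    calc f x * |F x ⬝ᵥ A *ᵥ F x| ≤ f x * (‖A.toContinuousBilinearMap‖ * ‖F x‖ * ‖F x‖) :=
          mul_le_mul_of_nonneg_left (A.abs_dotProduct_mulVec_le _ _) hx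
      _ = ‖A.toContinuousBilinearMap‖ * (‖F x‖ ^ 2 * f x) := by ring

variable {ι : Type*} [Fintype ι]

theorem two_mul_sum_sub_le_integral_mul_dotProduct_mulVec
    {f : ι → Ω → ℝ} {f₀ : Ω → ℝ} {g : Ω → n → ℝ} {W : Matrix n n ℝ} (hW : W.PosSemidef)
    (θ : n → ℝ) (c : ι → n → ℝ)
    (hf_nonneg : ∀ m x, 0 ≤ f m x) (hf_int : ∀ m, Integrable (f m) μ)
    (hf₀_meas : AEStronglyMeasurable f₀ μ) (hf₀_pos : ∀ᵐ x ∂μ, 0 < f₀ x)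
    (hff_int : ∀ m m', Integrable (fun x => f m x * f m' x / f₀ x) μ)
    (hg_meas : AEStronglyMeasurable g μ) (hg_int1 : ∀ m, Integrable (fun x => ‖g x‖ * f m x) μ)
    (hg_int2 : Integrable (fun x => ‖g x - θ‖ ^ 2 * f₀ x) μ) :
    2 * ∑ m, c m ⬝ᵥ W *ᵥ ∫ x, f m x • (g x - θ) ∂μ
        - ∑ m, ∑ m', (∫ x, f m x * f m' x / f₀ x ∂μ) * (c m ⬝ᵥ W *ᵥ c m')
      ≤ ∫ x, f₀ x * ((g x - θ) ⬝ᵥ W *ᵥ (g x - θ)) ∂μ := by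
  have hfg : ∀ m, Integrable (fun x => f m x • (g x - θ)) μ := fun m =>
    (hf_int m).smul_sub_const (hf_nonneg m) hg_meas (hg_int1 m) θ
  have hlin_int : ∀ m, Integrable (fun x => c m ⬝ᵥ W *ᵥ (f m x • (g x - θ))) μ := fun m =>
    (hfg m).dotProduct_mulVec (c m) W
  have hquad_int : ∀ m m', Integrable (fun x => f m x * f m' x / f₀ x * (c m ⬝ᵥ W *ᵥ c m')) μ :=
    fun m m' => (hff_int m m').mul_const _
  have hpointwise : ∀ᵐ x ∂μ, 2 * ∑ m, c m ⬝ᵥ W *ᵥ (f m x • (g x - θ))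
      - ∑ m, ∑ m', f m x * f m' x / f₀ x * (c m ⬝ᵥ W *ᵥ c m')
      ≤ f₀ x * ((g x - θ) ⬝ᵥ W *ᵥ (g x - θ)) := hf₀_pos.mono fun x hx => by
    simpa only [mulVec_smul, dotProduct_smul, smul_eq_mul] using
      hW.two_mul_sum_sub_le hx (fun m => f m x) c (g x - θ)
  have hlin_sum := integrable_finsetSum Finset.univ fun m _ => hlin_int m
  have hquad_sum := integrable_finsetSum Finset.univ fun m _ =>
    integrable_finsetSum Finset.univ fun m' _ => hquad_int m m'
  refine Eq.trans_le ?_ (integral_mono_ae ((hlin_sum.const_mul 2).sub hquad_sum)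
    (hf₀_meas.integrable_mul_dotProduct_mulVec_self (hf₀_pos.mono fun _ hx => hx.le)
      (hg_meas.sub aestronglyMeasurable_const) hg_int2 W) hpointwise)
  simp only [Pi.sub_apply]
  rw [integral_sub (hlin_sum.const_mul 2) hquad_sum, integral_const_mul,
    integral_finsetSum _ fun m _ => hlin_int m,
    integral_finsetSum _ fun m _ => integrable_finsetSum Finset.univ fun m' _ => hquad_int m m']
  simp_rw [integral_dotProduct_mulVec (hfg _), integral_finsetSum _ fun m' _ => hquad_int _ m',
    integral_mul_const]

end MeasureTheory

theorem lu_cbtb_fixed_test_points_general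
    {Ω : Type*} [MeasurableSpace Ω] (μ : Measure Ω)
    (M K P : ℕ)
    (f : Fin (P + 1) → Ω → ℝ)
    (hf_nonneg : ∀ m x, 0 ≤ f m x)
    (hf_int : ∀ m, Integrable (f m) μ)
    (hf_one : ∀ m, ∫ x, f m x ∂μ = 1)
    (hf0_pos : ∀ᵐ x ∂μ, 0 < f 0 x)
    (B : Matrix (Fin (P + 1)) (Fin (P + 1)) ℝ)
    (hB : ∀ m n, B m n = ∫ x, f m x * f n x / f 0 x ∂μ)
    (hB_fin : ∀ m n, Integrable (fun x => f m x * f n x / f 0 x) μ)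
    (θ : Fin (P + 1) → Fin M → ℝ)
    (W : Matrix (Fin M) (Fin M) ℝ) (hW : W.PosSemidef)
    (U : Fin (P + 1) → Matrix (Fin M) (Fin (M - K)) ℝ)
    (D : Matrix (Fin (P + 1) × Fin (M - K)) (Fin (P + 1) × Fin (M - K)) ℝ)
    (hD : ∀ m n i j, D (m, i) (n, j) = ((U m)ᵀ * W * U n) i j * B m n)
    (t : Fin (P + 1) × Fin (M - K) → ℝ)
    (ht : ∀ m i, t (m, i) = (U m)ᵀ.mulVec (W.mulVec (fun k => θ m k - θ 0 k)) i)
    (g : Ω → Fin M → ℝ) (hg_meas : Measurable g)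
    (hg_int1 : ∀ m, Integrable (fun x => ‖g x‖ * f m x) μ)
    (hg_int2 : Integrable (fun x => ‖g x - θ 0‖ ^ 2 * f 0 x) μ)
    (hg_cunbiased : ∀ m, (U m)ᵀ.mulVec (W.mulVec (∫ x, f m x • (g x - θ m) ∂μ)) = 0)
    (hD_inv : IsUnit D.det) :
    ∫ x, f 0 x * ((g x - θ 0) ⬝ᵥ W.mulVec (g x - θ 0)) ∂μ ≥ t ⬝ᵥ D⁻¹.mulVec t := by
  set a := D⁻¹ *ᵥ t
  have hDa : D *ᵥ a = t := by rw [mulVec_mulVec, mul_nonsing_inv _ hD_inv, one_mulVec]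
  have hbound := two_mul_sum_sub_le_integral_mul_dotProduct_mulVec hW (θ 0)
    (fun m => U m *ᵥ Function.curry a m) hf_nonneg hf_int (hf_int 0).aestronglyMeasurable hf0_pos
    hB_fin hg_meas.aestronglyMeasurable hg_int1 hg_int2
  have hlin : ∑ m, (U m *ᵥ Function.curry a m) ⬝ᵥ W *ᵥ ∫ x, f m x • (g x - θ 0) ∂μ = a ⬝ᵥ t := by
    rw [sum_mulVec_curry_dotProduct_mulVec]
    congr 1
    ext ⟨m, i⟩
    rw [ht, integral_smul_sub_eq_add (hf_int m) (hf_one m)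
      ((hf_int m).smul_sub_const (hf_nonneg m) hg_meas.aestronglyMeasurable (hg_int1 m) (θ m)),
      mulVec_add, mulVec_add, hg_cunbiased, zero_add]
    rfl
  simp only [← hB] at hbound
  rw [hlin, sum_sum_mul_mulVec_curry_dotProduct_mulVec U W B hD, hDa] at hbound
  rw [ge_iff_le, dotProduct_comm]
  linarith

/-- **Theorem 1 (LU-CBTB) for a fixed set of test points.**
If the estimator `g` is absolutely integrable against every density `f m`, has a finite
weighted second moment under `f 0`, and satisfies the pointwise C-unbiasedness conditions
`Uₘᵀ W (∫ (g − θₘ) fₘ dμ) = 0` for all `m`, and if the matrix `D` is invertible, then the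
weighted mean-squared error satisfies `∫ (g − θ₀)ᵀ W (g − θ₀) f₀ dμ ≥ tᵀ D⁻¹ t`. -/
theorem lu_cbtb_fixed_test_points
    {Ω : Type*} [MeasurableSpace Ω] (μ : Measure Ω)
    (M K P : ℕ) (hK : 0 < K) (hKM : K < M) (hP : 1 ≤ P)
    (f : Fin (P + 1) → Ω → ℝ)
    (hf_meas : ∀ m, Measurable (f m))
    (hf_nonneg : ∀ m x, 0 ≤ f m x)
    (hf_int : ∀ m, Integrable (f m) μ)
    (hf_one : ∀ m, ∫ x, f m x ∂μ = 1)
    (hf0_pos : ∀ᵐ x ∂μ, 0 < f 0 x)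
    (B : Matrix (Fin (P + 1)) (Fin (P + 1)) ℝ)
    (hB : ∀ m n, B m n = ∫ x, f m x * f n x / f 0 x ∂μ)
    (hB_fin : ∀ m n, Integrable (fun x => f m x * f n x / f 0 x) μ)
    (θ : Fin (P + 1) → Fin M → ℝ)
    (W : Matrix (Fin M) (Fin M) ℝ) (hW : W.PosSemidef)
    (U : Fin (P + 1) → Matrix (Fin M) (Fin (M - K)) ℝ)
    (D : Matrix (Fin (P + 1) × Fin (M - K)) (Fin (P + 1) × Fin (M - K)) ℝ)
    (hD : ∀ m n i j, D (m, i) (n, j) = ((U m)ᵀ * W * U n) i j * B m n)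
    (t : Fin (P + 1) × Fin (M - K) → ℝ)
    (ht : ∀ m i, t (m, i) = (U m)ᵀ.mulVec (W.mulVec (fun k => θ m k - θ 0 k)) i)
    (g : Ω → Fin M → ℝ) (hg_meas : Measurable g)
    (hg_int1 : ∀ m, Integrable (fun x => ‖g x‖ * f m x) μ)
    (hg_int2 : Integrable (fun x => ‖g x - θ 0‖ ^ 2 * f 0 x) μ)
    (hg_cunbiased : ∀ m, (U m)ᵀ.mulVec (W.mulVec (∫ x, f m x • (g x - θ m) ∂μ)) = 0)
    (hD_inv : IsUnit D.det) :
    ∫ x, f 0 x * ((g x - θ 0) ⬝ᵥ W.mulVec (g x - θ 0)) ∂μ ≥ t ⬝ᵥ D⁻¹.mulVec t :=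
  lu_cbtb_fixed_test_points_general μ M K P f hf_nonneg hf_int hf_one hf0_pos B hB hB_fin θ W hW U D
    hD t ht g hg_meas hg_int1 hg_int2 hg_cunbiased hD_inv
end

section
/- (Achievability of the LU-CBTB: sufficiency of the equality condition in Theorem 1.) Assume D is invertible and let λ = D⁻¹ t ∈ ℝ^{(P+1)(M−K)}, with m-th block λ_m ∈ ℝ^{M−K}. Let W^{1/2} denote the positive semidefinite square root of W. If the estimator g satisfies, μ-almost everywhere, W^{1/2}(g − θ_0) = W^{1/2} · Σ_{m=0}^{P} U_m λ_m (f_m / f_0), then its weighted mean-squared error attains the bound: ∫ (g − θ_0)ᵀ W (g − θ_0) f_0 dμ = tᵀ D⁻¹ t. -/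
/-!
Since `W = (W^{1/2})ᵀ W^{1/2}`, the quadratic form `vᵀ W v` depends on `v` only through
`W^{1/2} v`, so the equality condition lets one replace `g − θ₀` by `Σₘ (fₘ / f₀) Uₘ λₘ` in the
integrand. Expanding the square and integrating turns the WMSE into
`Σₘₙ Bₘₙ (Uₘ λₘ)ᵀ W (Uₙ λₙ) = λᵀ D λ`, and `λᵀ D λ = λᵀ t = tᵀ D⁻¹ t`.
-/

open MeasureTheory Matrix

noncomputable def Matrix.PosSemidef.sqrt {n 𝕜 : Type*} [Fintype n] [DecidableEq n] [RCLike 𝕜] [PartialOrder 𝕜]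
    {A : Matrix n n 𝕜} (hA : A.PosSemidef) : Matrix n n 𝕜 :=
  hA.1.eigenvectorUnitary.1 * diagonal ((↑) ∘ (√·) ∘ hA.1.eigenvalues) *
  (star hA.1.eigenvectorUnitary : Matrix n n 𝕜)

namespace Matrix

namespace PosSemidef

variable {n 𝕜 : Type*} [Fintype n] [DecidableEq n] [RCLike 𝕜] {A : Matrix n n 𝕜}

lemma conjTranspose_sqrt [PartialOrder 𝕜] (hA : A.PosSemidef) : hA.sqrtᴴ = hA.sqrt := by
  simp only [sqrt, star_eq_conjTranspose, Matrix.mul_assoc, conjTranspose_mul,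
    conjTranspose_conjTranspose, diagonal_conjTranspose]
  rw [show star ((RCLike.ofReal : ℝ → 𝕜) ∘ (√·) ∘ hA.1.eigenvalues) = (↑) ∘ (√·) ∘ hA.1.eigenvalues
    from funext fun i => RCLike.conj_ofReal _]

-- Needs the standard order on `𝕜`: only then does `A.PosSemidef` make the eigenvalues nonnegative.
open scoped ComplexOrder in
lemma sqrt_mul_self (hA : A.PosSemidef) : hA.sqrt * hA.sqrt = A := by
  conv_rhs => rw [hA.1.spectral_theorem, Unitary.conjStarAlgAut_apply]
  simp only [sqrt, Matrix.mul_assoc]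
  rw [← Matrix.mul_assoc (star _ : Matrix n n 𝕜),
    Unitary.star_mul_self_of_mem hA.1.eigenvectorUnitary.2, Matrix.one_mul,
    ← Matrix.mul_assoc (diagonal _), diagonal_mul_diagonal]
  congr 3
  ext i
  simp [← RCLike.ofReal_mul, Real.mul_self_sqrt (hA.eigenvalues_nonneg i)]

end PosSemidef

variable {m n ι κ α : Type*} [Fintype m] [Fintype n] [Fintype ι] [Fintype κ] [CommSemiring α]

lemma dotProduct_transpose_mul_self_mulVec (S : Matrix m n α) (v : n → α) :
    v ⬝ᵥ (Sᵀ * S) *ᵥ v = S *ᵥ v ⬝ᵥ S *ᵥ v := by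
  rw [← mulVec_mulVec, dotProduct_mulVec, vecMul_transpose]

lemma PosSemidef.dotProduct_mulVec_congr_sqrt {W : Matrix n n ℝ} [DecidableEq n]
    (hW : W.PosSemidef) {v w : n → ℝ} (h : hW.sqrt *ᵥ v = hW.sqrt *ᵥ w) :
    v ⬝ᵥ W *ᵥ v = w ⬝ᵥ W *ᵥ w := by
  have hfactor : hW.sqrtᵀ * hW.sqrt = W := by
    rw [← conjTranspose_eq_transpose_of_trivial, hW.conjTranspose_sqrt, hW.sqrt_mul_self]
  rw [← hfactor, dotProduct_transpose_mul_self_mulVec, dotProduct_transpose_mul_self_mulVec, h]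

lemma sum_smul_dotProduct_mulVec_sum_smul (W : Matrix n n α) (c : ι → α) (u : ι → n → α) :
    (∑ i, c i • u i) ⬝ᵥ W *ᵥ ∑ j, c j • u j = ∑ i, ∑ j, c i * c j * (u i ⬝ᵥ W *ᵥ u j) := by
  rw [mulVec_sum, sum_dotProduct]
  refine Finset.sum_congr rfl fun i _ => ?_
  rw [dotProduct_sum]
  refine Finset.sum_congr rfl fun j _ => ?_
  rw [mulVec_smul, smul_dotProduct, dotProduct_smul, smul_eq_mul, smul_eq_mul, mul_assoc]

lemma dotProduct_mulVec_eq_sum_of_blocks (W : Matrix m m α) (U : ι → Matrix m κ α)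
    (B : Matrix ι ι α) (D : Matrix (ι × κ) (ι × κ) α)
    (hD : ∀ i j a b, D (i, a) (j, b) = ((U i)ᵀ * W * U j) a b * B i j) (v : ι × κ → α) :
    v ⬝ᵥ D *ᵥ v =
      ∑ i, ∑ j, B i j * (U i *ᵥ (fun a => v (i, a)) ⬝ᵥ W *ᵥ U j *ᵥ (fun b => v (j, b))) := by
  have hblock : ∀ i j, U i *ᵥ (fun a => v (i, a)) ⬝ᵥ W *ᵥ U j *ᵥ (fun b => v (j, b)) =
      (fun a => v (i, a)) ⬝ᵥ ((U i)ᵀ * W * U j) *ᵥ (fun b => v (j, b)) := fun i j => by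
    rw [← mulVec_mulVec, ← mulVec_mulVec, dotProduct_mulVec _ (U i)ᵀ, vecMul_transpose]
  simp only [hblock]
  simp only [dotProduct, mulVec, Fintype.sum_prod_type, hD, Finset.mul_sum]
  refine Finset.sum_congr rfl fun i _ => ?_
  rw [Finset.sum_comm]
  exact Finset.sum_congr rfl fun j _ => Finset.sum_congr rfl fun a _ =>
    Finset.sum_congr rfl fun b _ => by ring

lemma inv_mulVec_dotProduct_mulVec_inv_mulVec {R : Type*} [CommRing R] [DecidableEq ι]
    {D : Matrix ι ι R} (hD : IsUnit D.det) (t : ι → R) :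
    D⁻¹ *ᵥ t ⬝ᵥ D *ᵥ D⁻¹ *ᵥ t = t ⬝ᵥ D⁻¹ *ᵥ t := by
  rw [mulVec_mulVec, mul_nonsing_inv _ hD, one_mulVec, dotProduct_comm]

end Matrix

lemma integral_mul_dotProduct_mulVec_sum_div_smul {Ω n ι : Type*} [MeasurableSpace Ω]
    {μ : Measure Ω} [Fintype n] [Fintype ι] (f : ι → Ω → ℝ) (f₀ : Ω → ℝ)
    (hf : ∀ i j, Integrable (fun x => f i x * f j x / f₀ x) μ) (W : Matrix n n ℝ)
    (u : ι → n → ℝ) :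
    ∫ x, f₀ x * ((∑ i, (f i x / f₀ x) • u i) ⬝ᵥ W *ᵥ ∑ i, (f i x / f₀ x) • u i) ∂μ =
      ∑ i, ∑ j, (∫ x, f i x * f j x / f₀ x ∂μ) * (u i ⬝ᵥ W *ᵥ u j) := by
  -- at points where `f₀ x = 0` both sides vanish, because `a / 0 = 0`
  have hweight : ∀ a b c : ℝ, c * (a / c * (b / c)) = a * b / c := fun a b c => by
    rcases eq_or_ne c 0 with rfl | hc
    · simp
    · field_simp
  have hexpand : ∀ x, f₀ x * ((∑ i, (f i x / f₀ x) • u i) ⬝ᵥ W *ᵥ ∑ i, (f i x / f₀ x) • u i) =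
      ∑ i, ∑ j, f i x * f j x / f₀ x * (u i ⬝ᵥ W *ᵥ u j) := fun x => by
    simp only [sum_smul_dotProduct_mulVec_sum_smul, Finset.mul_sum, ← mul_assoc, hweight]
  simp only [hexpand]
  rw [integral_finsetSum _ fun i _ => integrable_finsetSum _ fun j _ => (hf i j).mul_const _]
  refine Finset.sum_congr rfl fun i _ => ?_
  rw [integral_finsetSum _ fun j _ => (hf i j).mul_const _]
  simp only [integral_mul_const]

theorem lu_cbtb_equality_condition_general
    {Ω : Type*} [MeasurableSpace Ω] (μ : Measure Ω)
    (M K P : ℕ)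
    (f : Fin (P + 1) → Ω → ℝ)
    (B : Matrix (Fin (P + 1)) (Fin (P + 1)) ℝ)
    (hB : ∀ m n, B m n = ∫ x, f m x * f n x / f 0 x ∂μ)
    (hB_fin : ∀ m n, Integrable (fun x => f m x * f n x / f 0 x) μ)
    (θ : Fin (P + 1) → Fin M → ℝ)
    (W : Matrix (Fin M) (Fin M) ℝ) (hW : W.PosSemidef)
    (U : Fin (P + 1) → Matrix (Fin M) (Fin (M - K)) ℝ)
    (D : Matrix (Fin (P + 1) × Fin (M - K)) (Fin (P + 1) × Fin (M - K)) ℝ)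
    (hD : ∀ m n i j, D (m, i) (n, j) = ((U m)ᵀ * W * U n) i j * B m n)
    (t : Fin (P + 1) × Fin (M - K) → ℝ)
    (hD_inv : IsUnit D.det)
    (g : Ω → Fin M → ℝ)
    (hg_eq : ∀ᵐ x ∂μ,
      hW.sqrt.mulVec (g x - θ 0) =
        hW.sqrt.mulVec (∑ m, (f m x / f 0 x) •
          (U m).mulVec (fun i => D⁻¹.mulVec t (m, i)))) :
    ∫ x, f 0 x * ((g x - θ 0) ⬝ᵥ W.mulVec (g x - θ 0)) ∂μ = t ⬝ᵥ D⁻¹.mulVec t := by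
  set u : Fin (P + 1) → Fin M → ℝ := fun m => U m *ᵥ fun i => (D⁻¹ *ᵥ t) (m, i)
  have hintegrand : (fun x => f 0 x * ((g x - θ 0) ⬝ᵥ W *ᵥ (g x - θ 0))) =ᵐ[μ]
      fun x => f 0 x * ((∑ m, (f m x / f 0 x) • u m) ⬝ᵥ W *ᵥ ∑ m, (f m x / f 0 x) • u m) := by
    filter_upwards [hg_eq] with x hx
    rw [hW.dotProduct_mulVec_congr_sqrt hx]
  rw [integral_congr_ae hintegrand, integral_mul_dotProduct_mulVec_sum_div_smul f (f 0) hB_fin]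
  simp only [← hB]
  rw [← dotProduct_mulVec_eq_sum_of_blocks W U B D hD, inv_mulVec_dotProduct_mulVec_inv_mulVec hD_inv]

/-- **Achievability of the LU-CBTB (sufficiency of the equality condition in Theorem 1).**
If `D` is invertible, `λ = D⁻¹ t` (with `m`-th block `λₘ`), and the estimator `g` satisfies
`W^{1/2}(g − θ₀) = W^{1/2} Σₘ Uₘ λₘ (fₘ/f₀)` μ-a.e. (where `W^{1/2}` is the positive
semidefinite square root of `W`), then the weighted MSE attains the bound `tᵀ D⁻¹ t`. -/
theorem lu_cbtb_equality_condition
    {Ω : Type*} [MeasurableSpace Ω] (μ : Measure Ω)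
    (M K P : ℕ) (hK : 0 < K) (hKM : K < M) (hP : 1 ≤ P)
    (f : Fin (P + 1) → Ω → ℝ)
    (hf_meas : ∀ m, Measurable (f m))
    (hf_nonneg : ∀ m x, 0 ≤ f m x)
    (hf_int : ∀ m, Integrable (f m) μ)
    (hf_one : ∀ m, ∫ x, f m x ∂μ = 1)
    (hf0_pos : ∀ᵐ x ∂μ, 0 < f 0 x)
    (B : Matrix (Fin (P + 1)) (Fin (P + 1)) ℝ)
    (hB : ∀ m n, B m n = ∫ x, f m x * f n x / f 0 x ∂μ)
    (hB_fin : ∀ m n, Integrable (fun x => f m x * f n x / f 0 x) μ)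
    (θ : Fin (P + 1) → Fin M → ℝ)
    (W : Matrix (Fin M) (Fin M) ℝ) (hW : W.PosSemidef)
    (U : Fin (P + 1) → Matrix (Fin M) (Fin (M - K)) ℝ)
    (D : Matrix (Fin (P + 1) × Fin (M - K)) (Fin (P + 1) × Fin (M - K)) ℝ)
    (hD : ∀ m n i j, D (m, i) (n, j) = ((U m)ᵀ * W * U n) i j * B m n)
    (t : Fin (P + 1) × Fin (M - K) → ℝ)
    (ht : ∀ m i, t (m, i) = (U m)ᵀ.mulVec (W.mulVec (fun k => θ m k - θ 0 k)) i)
    (hD_inv : IsUnit D.det)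
    (g : Ω → Fin M → ℝ) (hg_meas : Measurable g)
    (hg_eq : ∀ᵐ x ∂μ,
      hW.sqrt.mulVec (g x - θ 0) =
        hW.sqrt.mulVec (∑ m, (f m x / f 0 x) •
          (U m).mulVec (fun i => D⁻¹.mulVec t (m, i)))) :
    ∫ x, f 0 x * ((g x - θ 0) ⬝ᵥ W.mulVec (g x - θ 0)) ∂μ = t ⬝ᵥ D⁻¹.mulVec t :=
  lu_cbtb_equality_condition_general μ M K P f B hB hB_fin θ W hW U D hD t hD_inv g hg_eq
end

section
/- (Proposition 2 for a fixed set of test points, matrix form: the LU-CBTB is dominated by the CBTB.) Let B ∈ ℝ^{(P+1)×(P+1)} be symmetric positive semidefinite and invertible, let θ_0, …, θ_P ∈ ℝ^M, let W ∈ ℝ^{M×M} be symmetric positive semidefinite, and let U_0, …, U_P ∈ ℝ^{M×(M−K)}. Define T ∈ ℝ^{M×(P+1)} whose m-th column (m = 0,…,P) is θ_m − θ_0 (so the first column is zero), D the block matrix with (m,n) block U_mᵀ W U_n · B_{m,n}, and t the stacked vector with m-th block U_mᵀ W (θ_m − θ_0). If D is invertible, then tᵀ D⁻¹ t ≤ Tr(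 T B⁻¹ Tᵀ W ). -/
/-!
Factor `B = Cᵀ C` and `W = Sᵀ S`. Then `D = Xᵀ X` for the matrix `X` with `((p, k), (m, i))` entry
`C p m * (S * U m) k i`, and `t = Xᵀ y` for `y = vec (S T C⁻¹)`. So `tᵀ D⁻¹ t` is the squared length
of the orthogonal projection of `y` onto the column space of `X`, which is at most
`‖y‖² = Tr (C⁻ᵀ Tᵀ W T C⁻¹) = Tr (T B⁻¹ Tᵀ W)`.
-/

open Matrix

open scoped MatrixOrder ComplexOrder in
theorem Matrix.PosSemidef.exists_eq_conjTranspose_mul_self {𝕜 n : Type*} [RCLike 𝕜] [Fintype n]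
    [DecidableEq n] {A : Matrix n n 𝕜} (hA : A.PosSemidef) : ∃ C : Matrix n n 𝕜, A = Cᴴ * C :=
  ⟨CFC.sqrt A, by
    rw [(CFC.sqrt_nonneg A).posSemidef.isHermitian.eq, CFC.sqrt_mul_sqrt_self A hA.nonneg]⟩

theorem Matrix.dotProduct_mulVec_eq_transpose_mulVec_dotProduct {R m n : Type*} [CommSemiring R]
    [Fintype m] [Fintype n] (X : Matrix m n R) (u : m → R) (z : n → R) :
    u ⬝ᵥ X *ᵥ z = Xᵀ *ᵥ u ⬝ᵥ z := by
  rw [dotProduct_mulVec, mulVec_transpose]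

theorem Matrix.transpose_mulVec_dotProduct_inv_mulVec_le {R m n : Type*} [Field R] [LinearOrder R]
    [IsStrictOrderedRing R] [Fintype m] [Fintype n] [DecidableEq n] (X : Matrix m n R)
    (hX : IsUnit (Xᵀ * X).det) (y : m → R) :
    Xᵀ *ᵥ y ⬝ᵥ (Xᵀ * X)⁻¹ *ᵥ (Xᵀ *ᵥ y) ≤ y ⬝ᵥ y := by
  set z := (Xᵀ * X)⁻¹ *ᵥ (Xᵀ *ᵥ y)
  have hz : Xᵀ *ᵥ (X *ᵥ z) = Xᵀ *ᵥ y := by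
    rw [mulVec_mulVec, mulVec_mulVec, mul_nonsing_inv _ hX, one_mulVec]
  have hcross : y ⬝ᵥ X *ᵥ z = Xᵀ *ᵥ y ⬝ᵥ z := dotProduct_mulVec_eq_transpose_mulVec_dotProduct ..
  have hsq : X *ᵥ z ⬝ᵥ X *ᵥ z = Xᵀ *ᵥ y ⬝ᵥ z := by
    rw [dotProduct_mulVec_eq_transpose_mulVec_dotProduct, hz]
  have hres : 0 ≤ (y - X *ᵥ z) ⬝ᵥ (y - X *ᵥ z) := Fintype.sum_nonneg fun _ => mul_self_nonneg _
  have hexp : (y - X *ᵥ z) ⬝ᵥ (y - X *ᵥ z) = y ⬝ᵥ y - Xᵀ *ᵥ y ⬝ᵥ z := by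
    rw [sub_dotProduct, dotProduct_sub, dotProduct_sub, dotProduct_comm (X *ᵥ z) y, hcross, hsq]
    ring
  linarith

theorem Matrix.trace_transpose_mul_self_mul_inv {R μ ι : Type*} [CommRing R] [Fintype μ]
    [Fintype ι] [DecidableEq ι] (A : Matrix μ ι R) (C : Matrix ι ι R) :
    ((A * C⁻¹)ᵀ * (A * C⁻¹)).trace = (Aᵀ * A * (Cᵀ * C)⁻¹).trace := by
  rw [Matrix.mul_inv_rev, ← transpose_nonsing_inv, transpose_mul, Matrix.mul_assoc, trace_mul_comm]
  simp only [Matrix.mul_assoc]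

section BlockGramFactor

variable {R ι μ ν : Type*} [CommSemiring R] [Fintype ι] [Fintype μ]

def blockGramFactor (C : Matrix ι ι R) (V : ι → Matrix μ ν R) : Matrix (ι × μ) (ι × ν) R :=
  of fun pk mi => C pk.1 mi.1 * V mi.1 pk.2 mi.2

theorem transpose_blockGramFactor_mul_self_apply (C : Matrix ι ι R) (V : ι → Matrix μ ν R)
    (m n : ι) (i j : ν) :
    ((blockGramFactor C V)ᵀ * blockGramFactor C V) (m, i) (n, j) =
      ((V m)ᵀ * V n) i j * (Cᵀ * C) m n := by
  simp only [mul_apply, transpose_apply, blockGramFactor, of_apply, Fintype.sum_prod_type,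
    Finset.sum_mul_sum]
  rw [Finset.sum_comm]
  refine Finset.sum_congr rfl fun k _ => Finset.sum_congr rfl fun p _ => ?_
  ring

theorem transpose_blockGramFactor_mulVec_vec (C : Matrix ι ι R) (V : ι → Matrix μ ν R)
    (Z : Matrix μ ι R) (m : ι) (i : ν) :
    ((blockGramFactor C V)ᵀ *ᵥ vec Z) (m, i) = ((V m)ᵀ * Z * C) i m := by
  simp only [mulVec, dotProduct, mul_apply, transpose_apply, blockGramFactor, of_apply, vec,
    Fintype.sum_prod_type, Finset.sum_mul]
  refine Finset.sum_congr rfl fun p _ => Finset.sum_congr rfl fun k _ => ?_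
  ring

end BlockGramFactor

theorem lu_cbtb_le_cbtb_fixed_test_points_general
    (M K P : ℕ)
    (B : Matrix (Fin (P + 1)) (Fin (P + 1)) ℝ)
    (hB : B.PosSemidef) (hB_inv : IsUnit B.det)
    (θ : Fin (P + 1) → Fin M → ℝ)
    (W : Matrix (Fin M) (Fin M) ℝ) (hW : W.PosSemidef)
    (U : Fin (P + 1) → Matrix (Fin M) (Fin (M - K)) ℝ)
    (T : Matrix (Fin M) (Fin (P + 1)) ℝ)
    (hT : ∀ i m, T i m = θ m i - θ 0 i)
    (D : Matrix (Fin (P + 1) × Fin (M - K)) (Fin (P + 1) × Fin (M - K)) ℝ)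
    (hD : ∀ m n i j, D (m, i) (n, j) = ((U m)ᵀ * W * U n) i j * B m n)
    (t : Fin (P + 1) × Fin (M - K) → ℝ)
    (ht : ∀ m i, t (m, i) = (U m)ᵀ.mulVec (W.mulVec (fun k => θ m k - θ 0 k)) i)
    (hD_inv : IsUnit D.det) :
    t ⬝ᵥ D⁻¹.mulVec t ≤ (T * B⁻¹ * Tᵀ * W).trace := by
  obtain ⟨C, rfl⟩ := hB.exists_eq_conjTranspose_mul_self
  obtain ⟨S, rfl⟩ := hW.exists_eq_conjTranspose_mul_self
  simp only [conjTranspose_eq_transpose_of_trivial] at hB_inv hD ht ⊢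
  have hC : IsUnit C.det := by
    rw [det_mul, det_transpose] at hB_inv
    exact isUnit_of_mul_isUnit_left hB_inv
  set X := blockGramFactor C fun m => S * U m
  have hXD : Xᵀ * X = D := by
    ext ⟨m, i⟩ ⟨n, j⟩
    rw [transpose_blockGramFactor_mul_self_apply, hD]
    simp only [transpose_mul, Matrix.mul_assoc]
  have hXt : Xᵀ *ᵥ vec (S * T * C⁻¹) = t := by
    ext ⟨m, i⟩
    have hcol : (fun k => θ m k - θ 0 k) = fun k => T k m := funext fun k => (hT k m).symm
    rw [transpose_blockGramFactor_mulVec_vec, ht, hcol, mulVec_mulVec]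
    change _ = ((U m)ᵀ * (Sᵀ * S) * T) i m
    simp only [transpose_mul, Matrix.mul_assoc, nonsing_inv_mul _ hC, Matrix.mul_one]
  calc t ⬝ᵥ D⁻¹ *ᵥ t ≤ vec (S * T * C⁻¹) ⬝ᵥ vec (S * T * C⁻¹) := by
        simpa only [hXD, hXt] using
          transpose_mulVec_dotProduct_inv_mulVec_le X (hXD ▸ hD_inv) (vec (S * T * C⁻¹))
    _ = (T * (Cᵀ * C)⁻¹ * Tᵀ * (Sᵀ * S)).trace := by
        rw [vec_dotProduct_vec, trace_transpose_mul_self_mul_inv, trace_mul_comm _ (Sᵀ * S)]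
        simp only [transpose_mul, Matrix.mul_assoc]
        rw [trace_mul_comm Tᵀ]
        simp only [Matrix.mul_assoc]

/-- **Proposition 2 for a fixed set of test points (matrix form):**
the LU-CBTB is dominated by the CBTB, `tᵀ D⁻¹ t ≤ Tr(T B⁻¹ Tᵀ W)`. -/
theorem lu_cbtb_le_cbtb_fixed_test_points
    (M K P : ℕ) (hK : 0 < K) (hKM : K < M) (hP : 1 ≤ P)
    (B : Matrix (Fin (P + 1)) (Fin (P + 1)) ℝ)
    (hB : B.PosSemidef) (hB_inv : IsUnit B.det)
    (θ : Fin (P + 1) → Fin M → ℝ)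
    (W : Matrix (Fin M) (Fin M) ℝ) (hW : W.PosSemidef)
    (U : Fin (P + 1) → Matrix (Fin M) (Fin (M - K)) ℝ)
    (T : Matrix (Fin M) (Fin (P + 1)) ℝ)
    (hT : ∀ i m, T i m = θ m i - θ 0 i)
    (D : Matrix (Fin (P + 1) × Fin (M - K)) (Fin (P + 1) × Fin (M - K)) ℝ)
    (hD : ∀ m n i j, D (m, i) (n, j) = ((U m)ᵀ * W * U n) i j * B m n)
    (t : Fin (P + 1) × Fin (M - K) → ℝ)
    (ht : ∀ m i, t (m, i) = (U m)ᵀ.mulVec (W.mulVec (fun k => θ m k - θ 0 k)) i)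
    (hD_inv : IsUnit D.det) :
    t ⬝ᵥ D⁻¹.mulVec t ≤ (T * B⁻¹ * Tᵀ * W).trace :=
  lu_cbtb_le_cbtb_fixed_test_points_general M K P B hB hB_inv θ W hW U T hT D hD t ht hD_inv
end

section
/- (Proposition 3 for a fixed set of test points: under linear constraints the LU-CBTB coincides with the CBTB.) Let B ∈ ℝ^{(P+1)×(P+1)} be symmetric and invertible, let θ_0, …, θ_P ∈ ℝ^M, let W ∈ ℝ^{M×M} be symmetric, and let U ∈ ℝ^{M×(M−K)} satisfy Uᵀ U = I_{M−K}. Assume U Uᵀ (θ_m − θ_0) = θ_m − θ_0 for every m = 0,…,P (i.e., all test-point differences lie in the column space of U). Define T ∈ ℝ^{M×(P+1)} whose m-th column is θ_m − θ_0, let t ∈ ℝ^{(P+1)(M−K)} be the stacked vector with m-th block Uᵀ W (θ_m − θ_0), and let D = B ⊗ (Uᵀ W U) (the Kronecker product, so the (m,n) block of D is B_{m,n} · Uᵀ W U). If Uᵀ W U is invertible, then D is invertible and tᵀ D⁻¹ t = Tr( T B⁻¹ Tᵀ W ). -/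
open Matrix Kronecker

/-- **Proposition 3 for a fixed set of test points:**
under linear constraints (all test-point differences lie in the column space of the common
orthonormal complement matrix `U`), the LU-CBTB coincides with the CBTB:
`D = B ⊗ (Uᵀ W U)` is invertible and `tᵀ D⁻¹ t = Tr(T B⁻¹ Tᵀ W)`. -/
theorem lu_cbtb_eq_cbtb_linear_constraints
    (M K P : ℕ) (hK : 0 < K) (hKM : K < M) (hP : 1 ≤ P)
    (B : Matrix (Fin (P + 1)) (Fin (P + 1)) ℝ)
    (hB_symm : B.IsSymm) (hB_inv : IsUnit B.det)
    (θ : Fin (P + 1) → Fin M → ℝ)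
    (W : Matrix (Fin M) (Fin M) ℝ) (hW_symm : W.IsSymm)
    (U : Matrix (Fin M) (Fin (M - K)) ℝ)
    (hU : Uᵀ * U = 1)
    (hUU : ∀ m, (U * Uᵀ).mulVec (fun k => θ m k - θ 0 k) = fun k => θ m k - θ 0 k)
    (T : Matrix (Fin M) (Fin (P + 1)) ℝ)
    (hT : ∀ i m, T i m = θ m i - θ 0 i)
    (t : Fin (P + 1) × Fin (M - K) → ℝ)
    (ht : ∀ m i, t (m, i) = Uᵀ.mulVec (W.mulVec (fun k => θ m k - θ 0 k)) i)
    (D : Matrix (Fin (P + 1) × Fin (M - K)) (Fin (P + 1) × Fin (M - K)) ℝ)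
    (hD : D = B ⊗ₖ (Uᵀ * W * U))
    (hUWU_inv : IsUnit (Uᵀ * W * U).det) :
    IsUnit D.det ∧ t ⬝ᵥ D⁻¹.mulVec t = (T * B⁻¹ * Tᵀ * W).trace := by
  have hDet : IsUnit D.det := by
    rw [hD, det_kronecker]
    exact (hB_inv.pow _).mul (hUWU_inv.pow _)
  refine ⟨hDet, ?_⟩
  -- T = U * (Uᵀ * T)
  have hTU : U * (Uᵀ * T) = T := by
    ext i m
    have := congrFun (hUU m) i
    simp only [Matrix.mulVec, dotProduct, Matrix.mul_apply, hT] at this ⊢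
    rw [← this]
    simp only [Finset.mul_sum, Finset.sum_mul, mul_assoc]
    exact Finset.sum_comm
  have htS : ∀ m i, t (m, i) = (Uᵀ * W * T) i m := by
    intro m i
    rw [ht]
    simp only [Matrix.mulVec, dotProduct, Matrix.mul_apply, hT, Finset.mul_sum,
      Finset.sum_mul, mul_assoc]
    exact Finset.sum_comm
  have h1 : Uᵀ * W * T = (Uᵀ * W * U) * (Uᵀ * T) := by
    conv_lhs => rw [← hTU]
    simp only [Matrix.mul_assoc]
  have h2 : (Uᵀ * W * U)⁻¹ * (Uᵀ * W * T) = Uᵀ * T := by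
    rw [h1, ← Matrix.mul_assoc, Matrix.nonsing_inv_mul _ hUWU_inv, Matrix.one_mul]
  have h3 : (Uᵀ * W * T)ᵀ * (Uᵀ * T) = Tᵀ * W * T := by
    have e : (Uᵀ * W * T)ᵀ = Tᵀ * W * U := by
      simp only [Matrix.transpose_mul, Matrix.transpose_transpose, hW_symm.eq,
        Matrix.mul_assoc]
    rw [e, Matrix.mul_assoc (Tᵀ * W), hTU]
  have hBinv_symm : (B⁻¹)ᵀ = B⁻¹ := by
    rw [Matrix.transpose_nonsing_inv, hB_symm.eq]
  have hquad : t ⬝ᵥ D⁻¹.mulVec t =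
      ((Uᵀ * W * T)ᵀ * ((Uᵀ * W * U)⁻¹ * (Uᵀ * W * T)) * (B⁻¹)ᵀ).trace := by
    rw [hD, Matrix.inv_kronecker]
    simp only [dotProduct, Matrix.mulVec, Matrix.trace, Matrix.diag, Matrix.mul_apply,
      kroneckerMap_apply, Matrix.transpose_apply, Fintype.sum_prod_type, Finset.sum_mul,
      Finset.mul_sum, htS]
    refine Finset.sum_congr rfl fun m _ => ?_
    rw [Finset.sum_comm]
    refine Finset.sum_congr rfl fun n _ => Finset.sum_congr rfl fun i _ =>
      Finset.sum_congr rfl fun j _ => Finset.sum_congr rfl fun a _ =>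
      Finset.sum_congr rfl fun b _ => Finset.sum_congr rfl fun c _ =>
      Finset.sum_congr rfl fun d _ => ?_
    ring
  rw [hquad, h2, h3, hBinv_symm,
    show Tᵀ * W * T * B⁻¹ = Tᵀ * (W * (T * B⁻¹)) from by simp only [Matrix.mul_assoc],
    Matrix.trace_mul_comm,
    show W * (T * B⁻¹) * Tᵀ = W * (T * B⁻¹ * Tᵀ) from by simp only [Matrix.mul_assoc],
    Matrix.trace_mul_comm]
end

section
/- (Pointwise mean-unbiasedness of the CBTB-attaining estimator, Eq. (89) in the proof of Proposition 2.) Assume B is invertible. Define the estimator g : Ω → ℝ^M by g(x) = θ_0 + T B⁻¹ r(x), where r(x) ∈ ℝ^{P+1} has entries r_m(x) = f_m(x)/f_0(x) (m = 0,…,P) and T ∈ ℝ^{M×(P+1)} is the matrix whose m-th column is θ_m − θ_0. Then g is pointwise mean-unbiased at every test point: for each m = 0,…,P, ∫ (g − θ_m) f_m dμ = 0. -/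
open MeasureTheory Matrix

/-- **Pointwise mean-unbiasedness of the CBTB-attaining estimator (Eq. (89)):**
the estimator `g(x) = θ₀ + T B⁻¹ r(x)` with `rₘ(x) = fₘ(x)/f₀(x)` satisfies
`∫ (g − θₘ) fₘ dμ = 0` for every `m = 0,…,P`. -/
theorem cbtb_estimator_pointwise_unbiased
    {Ω : Type*} [MeasurableSpace Ω] (μ : Measure Ω)
    (M P : ℕ) (hM : 0 < M) (hP : 0 < P)
    (f : Fin (P + 1) → Ω → ℝ)
    (hf_meas : ∀ m, Measurable (f m))
    (hf_nonneg : ∀ m x, 0 ≤ f m x)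
    (hf_int : ∀ m, Integrable (f m) μ)
    (hf_one : ∀ m, ∫ x, f m x ∂μ = 1)
    (hf0_pos : ∀ᵐ x ∂μ, 0 < f 0 x)
    (B : Matrix (Fin (P + 1)) (Fin (P + 1)) ℝ)
    (hB : ∀ m n, B m n = ∫ x, f m x * f n x / f 0 x ∂μ)
    (hB_fin : ∀ m n, Integrable (fun x => f m x * f n x / f 0 x) μ)
    (hB_inv : IsUnit B.det)
    (θ : Fin (P + 1) → Fin M → ℝ)
    (T : Matrix (Fin M) (Fin (P + 1)) ℝ)
    (hT : ∀ i m, T i m = θ m i - θ 0 i)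
    (g : Ω → Fin M → ℝ)
    (hg : ∀ x, g x = θ 0 + T.mulVec (B⁻¹.mulVec (fun m => f m x / f 0 x))) :
    ∀ m, ∫ x, f m x • (g x - θ m) ∂μ = 0 := by
  intro m
  classical
  have hF : (fun x => f m x • (g x - θ m)) =
      fun x => f m x • ((θ 0 - θ m) : Fin M → ℝ) +
        ∑ p, ∑ n, (f m x * f n x / f 0 x) • ((fun i => T i p * B⁻¹ p n) : Fin M → ℝ) := by
    funext x i
    simp only [hg, Pi.add_apply, Pi.sub_apply, Pi.smul_apply, Finset.sum_apply,
      smul_eq_mul, Matrix.mulVec, dotProduct]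
    rw [mul_sub, mul_add]
    rw [add_sub_right_comm]
    simp only [Finset.mul_sum]
    congr 1
    · ring
    · refine Finset.sum_congr rfl fun p _ => Finset.sum_congr rfl fun n _ => by ring
  rw [hF]
  have hint1 : Integrable (fun x => f m x • ((θ 0 - θ m) : Fin M → ℝ)) μ :=
    (hf_int m).smul_const _
  have hint2 : Integrable (fun x =>
      ∑ p, ∑ n, (f m x * f n x / f 0 x) • ((fun i => T i p * B⁻¹ p n) : Fin M → ℝ)) μ :=
    integrable_finset_sum _ fun p _ => integrable_finset_sum _ fun n _ =>
      (hB_fin m n).smul_const _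
  rw [integral_add hint1 hint2, integral_smul_const, hf_one m, one_smul,
    integral_finset_sum _ fun p _ => integrable_finset_sum _ fun n _ =>
      (hB_fin m n).smul_const _]
  have hstep : ∀ p n : Fin (P + 1),
      (∫ x, (f m x * f n x / f 0 x) • ((fun i => T i p * B⁻¹ p n) : Fin M → ℝ) ∂μ)
        = B m n • ((fun i => T i p * B⁻¹ p n) : Fin M → ℝ) := by
    intro p n
    rw [integral_smul_const, ← hB m n]
  rw [Finset.sum_congr rfl fun p (_ : p ∈ Finset.univ) =>
    integral_finset_sum Finset.univ fun n _ => (hB_fin m n).smul_const ((fun i => T i p * B⁻¹ p n) : Fin M → ℝ),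
    Finset.sum_congr rfl fun p (_ : p ∈ Finset.univ) =>
      Finset.sum_congr rfl fun n (_ : n ∈ Finset.univ) => hstep p n]
  have hBsymm : ∀ p n, B p n = B n p := by
    intro p n; rw [hB, hB]
    congr 1; funext x; ring
  funext i
  simp only [Pi.add_apply, Pi.sub_apply, Finset.sum_apply, Pi.smul_apply, smul_eq_mul,
    Pi.zero_apply]
  have hkey : ∀ p : Fin (P + 1),
      ∑ n, B m n * (T i p * B⁻¹ p n) = T i p * (1 : Matrix (Fin (P+1)) (Fin (P+1)) ℝ) p m := by
    intro p
    have : ∀ n, B m n * (T i p * B⁻¹ p n) = T i p * (B⁻¹ p n * B n m) := by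
      intro n; rw [hBsymm m n]; ring
    simp only [this]
    rw [← Finset.mul_sum, ← Matrix.mul_apply, Matrix.nonsing_inv_mul B hB_inv]
  simp only [hkey]
  have : ∑ p, T i p * (1 : Matrix (Fin (P+1)) (Fin (P+1)) ℝ) p m = T i m := by
    simp [Matrix.one_apply, mul_ite]
  rw [this, hT i m]
  ring
end

section
/- (The CBTB-attaining estimator achieves the CBTB, Eq. (92) in the proof of Proposition 2.) Assume B is invertible and let W ∈ ℝ^{M×M} be symmetric. Define the estimator g : Ω → ℝ^M by g(x) = θ_0 + T B⁻¹ r(x), where r(x) ∈ ℝ^{P+1} has entries r_m(x) = f_m(x)/f_0(x) (m = 0,…,P) and T ∈ ℝ^{M×(P+1)} is the matrix whose m-th column is θ_m − θ_0. Then its weighted mean-squared error equals the CBTB: ∫ (g − θ_0)ᵀ W (g − θ_0) f_0 dμ = Tr( T B⁻¹ Tᵀ W ). -/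
open MeasureTheory Matrix

lemma quad_form_eq {k l : ℕ} (C : Matrix (Fin k) (Fin l) ℝ)
    (W : Matrix (Fin k) (Fin k) ℝ) (v : Fin l → ℝ) :
    (C.mulVec v) ⬝ᵥ W.mulVec (C.mulVec v) = v ⬝ᵥ (Cᵀ * W * C).mulVec v := by
  rw [Matrix.mulVec_mulVec, Matrix.dotProduct_mulVec, Matrix.dotProduct_mulVec,
    Matrix.mul_assoc]
  conv_rhs => rw [← Matrix.vecMul_vecMul, Matrix.vecMul_transpose]

/-- **The CBTB-attaining estimator achieves the CBTB (Eq. (92)):**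
the estimator `g(x) = θ₀ + T B⁻¹ r(x)` with `rₘ(x) = fₘ(x)/f₀(x)` satisfies
`∫ (g − θ₀)ᵀ W (g − θ₀) f₀ dμ = Tr(T B⁻¹ Tᵀ W)`. -/
theorem cbtb_estimator_achieves_cbtb
    {Ω : Type*} [MeasurableSpace Ω] (μ : Measure Ω)
    (M P : ℕ) (hM : 0 < M) (hP : 0 < P)
    (f : Fin (P + 1) → Ω → ℝ)
    (hf_meas : ∀ m, Measurable (f m))
    (hf_nonneg : ∀ m x, 0 ≤ f m x)
    (hf_int : ∀ m, Integrable (f m) μ)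
    (hf_one : ∀ m, ∫ x, f m x ∂μ = 1)
    (hf0_pos : ∀ᵐ x ∂μ, 0 < f 0 x)
    (B : Matrix (Fin (P + 1)) (Fin (P + 1)) ℝ)
    (hB : ∀ m n, B m n = ∫ x, f m x * f n x / f 0 x ∂μ)
    (hB_fin : ∀ m n, Integrable (fun x => f m x * f n x / f 0 x) μ)
    (hB_inv : IsUnit B.det)
    (W : Matrix (Fin M) (Fin M) ℝ) (hW_symm : W.IsSymm)
    (θ : Fin (P + 1) → Fin M → ℝ)
    (T : Matrix (Fin M) (Fin (P + 1)) ℝ)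
    (hT : ∀ i m, T i m = θ m i - θ 0 i)
    (g : Ω → Fin M → ℝ)
    (hg : ∀ x, g x = θ 0 + T.mulVec (B⁻¹.mulVec (fun m => f m x / f 0 x))) :
    ∫ x, f 0 x * ((g x - θ 0) ⬝ᵥ W.mulVec (g x - θ 0)) ∂μ = (T * B⁻¹ * Tᵀ * W).trace := by
  set A : Matrix (Fin (P + 1)) (Fin (P + 1)) ℝ := (T * B⁻¹)ᵀ * W * (T * B⁻¹) with hA
  -- pointwise identity
  have key : ∀ x, f 0 x * ((g x - θ 0) ⬝ᵥ W.mulVec (g x - θ 0))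
      = ∑ m, ∑ n, A m n * (f m x * f n x / f 0 x) := by
    intro x
    have h1 : g x - θ 0 = (T * B⁻¹).mulVec (fun m => f m x / f 0 x) := by
      rw [hg x]; simp [Matrix.mulVec_mulVec]
    rw [h1, quad_form_eq, ← hA]
    simp only [dotProduct, Matrix.mulVec, Finset.mul_sum]
    refine Finset.sum_congr rfl fun m _ => Finset.sum_congr rfl fun n _ => ?_
    rcases eq_or_ne (f 0 x) 0 with h0 | h0
    · simp [h0]
    · field_simp
  simp only [key]
  rw [integral_finset_sum _ fun m _ => integrable_finset_sum _
      fun n _ => (hB_fin m n).const_mul (A m n)]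
  have step : ∀ m, ∫ x, ∑ n, A m n * (f m x * f n x / f 0 x) ∂μ = ∑ n, A m n * B m n := by
    intro m
    rw [integral_finset_sum _ fun n _ => (hB_fin m n).const_mul (A m n)]
    exact Finset.sum_congr rfl fun n _ => by rw [integral_const_mul, hB]
  simp only [step]
  -- symmetry of B
  have hsym : ∀ a b, B a b = B b a := fun a b => by
    rw [hB, hB]; congr 1; ext x; ring
  have hBsymm : Bᵀ = B := by ext a b; rw [Matrix.transpose_apply, hsym]
  have h2 : (∑ m, ∑ n, A m n * B m n) = (A * B).trace := by
    rw [Matrix.trace]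
    refine Finset.sum_congr rfl fun m _ => ?_
    simp only [Matrix.diag, Matrix.mul_apply]
    exact Finset.sum_congr rfl fun n _ => by rw [hsym n m]
  rw [h2]
  have hBinv : B⁻¹ * B = 1 := Matrix.nonsing_inv_mul B hB_inv
  have e1 : A * B = B⁻¹ * Tᵀ * W * T := by
    rw [hA, Matrix.transpose_mul, Matrix.transpose_nonsing_inv, hBsymm]
    have : B⁻¹ * Tᵀ * W * (T * B⁻¹) * B = B⁻¹ * Tᵀ * W * T * (B⁻¹ * B) := by
      simp only [Matrix.mul_assoc]
    rw [this, hBinv, Matrix.mul_one]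
  rw [e1, Matrix.trace_mul_comm (B⁻¹ * Tᵀ * W) T]
  simp only [← Matrix.mul_assoc]
end
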